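/- Let v be a vertex in a 3-graph G with weight x_v < 1/3 in an optimum weight vector of G, and let H be a 3-graph. If G − {v} is H-free, then λ(G) ≤ π_λ(H)·(1 − x_v)³ / (6(1 − 3x_v)). -/

import Mathlib

/-! Write `λ(G, x) = λ(G − v, x) + x_v D` with `D = ∂λ/∂x_v`. Moving weight `s` onto `v` and
rescaling the other weights by `c = (1 − s)/(1 − x_v)` gives a curve through the optimum `x` on which
`λ(G, ·) = c³ λ(G − v, x) + s c² D`; its derivative vanishes at `s = x_v`, which gives
`3 λ(G − v, x) = (1 − 3x_v) D`, i.e. `(1 − 3x_v) λ(G) = λ(G − v, x)`. At `s = 0` the same rescaling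
is a feasible vector for `G − v`, so `λ(G − v, x) ≤ λ(G − v)(1 − x_v)³ ≤ π_λ(H)(1 − x_v)³/6`. -/

open Finset

/-- A (finite) hypergraph with vertex set `verts ⊆ ℕ` and edge set `edges`. -/
structure FinHypergraph where
  verts : Finset ℕ
  edges : Finset (Finset ℕ)

/-- Well-formedness: every edge is a subset of the vertex set. -/
def FinHypergraph.IsWf (G : FinHypergraph) : Prop := ∀ e ∈ G.edges, e ⊆ G.verts

/-- `G` is `r`-uniform: every edge has `r` vertices. -/
def FinHypergraph.IsUniform (G : FinHypergraph) (r : ℕ) : Prop := ∀ e ∈ G.edges, e.card = r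

/-- The Lagrangian polynomial `λ(G, x) = ∑_{e ∈ E(G)} ∏_{i ∈ e} x_i`. -/
noncomputable def lagPoly (G : FinHypergraph) (x : ℕ → ℝ) : ℝ := ∑ e ∈ G.edges, ∏ i ∈ e, x i

/-- Feasible weight vectors: the standard simplex on the vertex set of `G`. -/
def simplex (G : FinHypergraph) : Set (ℕ → ℝ) :=
  {x | (∀ i, 0 ≤ x i ∧ x i ≤ 1) ∧ ∑ i ∈ G.verts, x i = 1}

/-- The Lagrangian `λ(G)`: the supremum of `λ(G, x)` over the simplex. -/
noncomputable def lag (G : FinHypergraph) : ℝ := sSup (lagPoly G '' simplex G)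

/-- `G` contains a copy of `F` (a subgraph isomorphic to `F`). -/
def containsCopy (G F : FinHypergraph) : Prop :=
  ∃ f : ℕ → ℕ, Set.InjOn f ↑F.verts ∧ Set.MapsTo f ↑F.verts ↑G.verts ∧
    ∀ e ∈ F.edges, e.image f ∈ G.edges

/-- The induced subgraph `G − S` obtained by deleting the vertices in `S`. -/
def FinHypergraph.delete (G : FinHypergraph) (S : Finset ℕ) : FinHypergraph :=
  ⟨G.verts \ S, G.edges.filter (fun e => Disjoint e S)⟩

/-- The Lagrangian density `π_λ(H) = sup{3!·λ(G) : G is an H-free 3-graph}`. -/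
noncomputable def lagDensity (H : FinHypergraph) : ℝ :=
  sSup {c : ℝ | ∃ G : FinHypergraph, G.IsWf ∧ G.IsUniform 3 ∧ ¬ containsCopy G H ∧
    c = 6 * lag G}

lemma lagPoly_le_three {G : FinHypergraph} (hwf : G.IsWf) {x : ℕ → ℝ} (hx : x ∈ simplex G) :
    lagPoly G x ≤ 3 := by
  obtain ⟨hx01, hx1⟩ := hx
  calc lagPoly G x ≤ ∑ e ∈ G.verts.powerset, ∏ i ∈ e, x i :=
        sum_le_sum_of_subset_of_nonneg (fun e he => mem_powerset.mpr (hwf e he))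
          fun e _ _ => prod_nonneg fun i _ => (hx01 i).1
    _ = ∏ i ∈ G.verts, (x i + 1) := by simp [prod_add]
    _ ≤ ∏ i ∈ G.verts, Real.exp (x i) :=
        prod_le_prod (fun i _ => by linarith [(hx01 i).1]) fun i _ => by
          linarith [Real.add_one_le_exp (x i)]
    _ = Real.exp 1 := by rw [← Real.exp_sum, hx1]
    _ ≤ 3 := by linarith [Real.exp_one_lt_d9]

lemma lagPoly_le_lag {G : FinHypergraph} (hwf : G.IsWf) {x : ℕ → ℝ} (hx : x ∈ simplex G) :
    lagPoly G x ≤ lag G :=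
  le_csSup ⟨3, by rintro _ ⟨y, hy, rfl⟩; exact lagPoly_le_three hwf hy⟩ ⟨x, hx, rfl⟩

lemma lag_le_three {G : FinHypergraph} (hwf : G.IsWf) : lag G ≤ 3 :=
  Real.sSup_le (by rintro _ ⟨y, hy, rfl⟩; exact lagPoly_le_three hwf hy) (by norm_num)

lemma le_lagDensity {G H : FinHypergraph} (hwf : G.IsWf) (hu : G.IsUniform 3)
    (hfree : ¬ containsCopy G H) : 6 * lag G ≤ lagDensity H := by
  refine le_csSup ⟨18, ?_⟩ ⟨G, hwf, hu, hfree, rfl⟩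
  rintro _ ⟨G', hwf', -, -, rfl⟩
  linarith [lag_le_three hwf']

namespace FinHypergraph

variable {G : FinHypergraph} {v : ℕ}

lemma mem_delete_singleton_edges {e : Finset ℕ} :
    e ∈ (G.delete {v}).edges ↔ e ∈ G.edges ∧ v ∉ e := by
  simp [delete]

lemma IsWf.delete_singleton (hwf : G.IsWf) : (G.delete {v}).IsWf := by
  intro e he i hi
  obtain ⟨he, hve⟩ := mem_delete_singleton_edges.mp he
  exact mem_sdiff.mpr ⟨hwf e he hi, by rintro h; exact hve (mem_singleton.mp h ▸ hi)⟩

lemma IsUniform.delete_singleton {r : ℕ} (hu : G.IsUniform r) : (G.delete {v}).IsUniform r :=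
  fun e he => hu e (mem_delete_singleton_edges.mp he).1

end FinHypergraph

open FinHypergraph

/-- `∂λ(G, x)/∂x_v`. -/
noncomputable def linkPoly (G : FinHypergraph) (v : ℕ) (x : ℕ → ℝ) : ℝ :=
  ∑ e ∈ G.edges with v ∈ e, ∏ i ∈ e.erase v, x i

lemma lagPoly_eq_delete_add_linkPoly (G : FinHypergraph) (v : ℕ) (x : ℕ → ℝ) :
    lagPoly G x = lagPoly (G.delete {v}) x + x v * linkPoly G v x := by
  simp only [lagPoly, linkPoly, delete, disjoint_singleton_right, mul_sum]
  rw [← sum_filter_add_sum_filter_not G.edges (v ∈ ·)]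
  exact (add_comm _ _).trans
    (congrArg _ (sum_congr rfl fun e he => (mul_prod_erase e x (mem_filter.mp he).2).symm))

lemma lagPoly_eq_pow_mul {G : FinHypergraph} {r : ℕ} (hwf : G.IsWf) (hu : G.IsUniform r)
    {x y : ℕ → ℝ} {c : ℝ} (hy : ∀ i ∈ G.verts, y i = c * x i) :
    lagPoly G y = c ^ r * lagPoly G x := by
  rw [lagPoly, lagPoly, mul_sum]
  refine sum_congr rfl fun e he => ?_
  rw [prod_congr rfl fun i hi => hy i (hwf e he hi), prod_mul_distrib, prod_const, hu e he]

lemma linkPoly_eq_pow_mul {G : FinHypergraph} {r : ℕ} (hwf : G.IsWf) (hu : G.IsUniform r)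
    {v : ℕ} {x y : ℕ → ℝ} {c : ℝ} (hy : ∀ i ∈ G.verts, i ≠ v → y i = c * x i) :
    linkPoly G v y = c ^ (r - 1) * linkPoly G v x := by
  rw [linkPoly, linkPoly, mul_sum]
  refine sum_congr rfl fun e he => ?_
  obtain ⟨he, hve⟩ := mem_filter.mp he
  rw [prod_congr rfl fun i hi => hy i (hwf e he (mem_of_mem_erase hi)) (ne_of_mem_erase hi),
    prod_mul_distrib, prod_const, card_erase_of_mem hve, hu e he]

noncomputable def reweight (G : FinHypergraph) (v : ℕ) (x : ℕ → ℝ) (s : ℝ) : ℕ → ℝ :=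
  fun i => if i = v then s else if i ∈ G.verts then (1 - s) / (1 - x v) * x i else 0

section reweight

variable {G : FinHypergraph} {v : ℕ} {x : ℕ → ℝ}

lemma reweight_self (s : ℝ) : reweight G v x s v = s := if_pos rfl

lemma reweight_of_ne {i : ℕ} (s : ℝ) (hi : i ∈ G.verts) (hiv : i ≠ v) :
    reweight G v x s i = (1 - s) / (1 - x v) * x i := by
  simp [reweight, hi, hiv]

lemma sum_erase_eq_one_sub (hv : v ∈ G.verts) (hx : x ∈ simplex G) :
    ∑ i ∈ G.verts.erase v, x i = 1 - x v := by
  linarith [add_sum_erase G.verts x hv, hx.2]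

lemma sum_erase_reweight (hv : v ∈ G.verts) (hx : x ∈ simplex G) (hxv : x v < 1) (s : ℝ) :
    ∑ i ∈ G.verts.erase v, reweight G v x s i = 1 - s := by
  rw [sum_congr rfl fun i hi => reweight_of_ne s (mem_of_mem_erase hi) (ne_of_mem_erase hi),
    ← mul_sum, sum_erase_eq_one_sub hv hx]
  field_simp [(sub_pos.mpr hxv).ne']

lemma reweight_mem_simplex (hv : v ∈ G.verts) (hx : x ∈ simplex G) (hxv : x v < 1) {s : ℝ}
    (hs : s ∈ Set.Icc (0 : ℝ) 1) : reweight G v x s ∈ simplex G := by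
  refine ⟨fun i => ?_, ?_⟩
  swap
  · rw [← add_sum_erase _ _ hv, sum_erase_reweight hv hx hxv, reweight_self]; ring
  by_cases hiv : i = v
  · subst hiv; simpa [reweight_self] using hs
  by_cases hi : i ∈ G.verts
  · have hxi : x i ≤ 1 - x v := by
      rw [← sum_erase_eq_one_sub hv hx]
      exact single_le_sum (fun j _ => (hx.1 j).1) (mem_erase.mpr ⟨hiv, hi⟩)
    rw [reweight_of_ne s hi hiv, div_mul_eq_mul_div, div_le_one (sub_pos.mpr hxv)]
    have hxi0 := (hx.1 i).1
    exact ⟨div_nonneg (mul_nonneg (by linarith [hs.2]) hxi0) (sub_pos.mpr hxv).le,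
      by nlinarith [hs.1]⟩
  · simp [reweight, hi, hiv]

lemma reweight_zero_mem_simplex_delete (hv : v ∈ G.verts) (hx : x ∈ simplex G) (hxv : x v < 1) :
    reweight G v x 0 ∈ simplex (G.delete {v}) := by
  refine ⟨(reweight_mem_simplex hv hx hxv ⟨le_rfl, zero_le_one⟩).1, ?_⟩
  simp only [delete, sdiff_singleton_eq_erase, sum_erase_reweight hv hx hxv, sub_zero]

lemma lagPoly_reweight {r : ℕ} (hwf : G.IsWf) (hu : G.IsUniform r) (s : ℝ) :
    lagPoly G (reweight G v x s) =
      ((1 - s) / (1 - x v)) ^ r * lagPoly (G.delete {v}) x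
        + s * (((1 - s) / (1 - x v)) ^ (r - 1) * linkPoly G v x) := by
  rw [lagPoly_eq_delete_add_linkPoly G v, reweight_self,
    lagPoly_eq_pow_mul hwf.delete_singleton hu.delete_singleton fun i hi => ?_,
    linkPoly_eq_pow_mul hwf hu fun i hi hiv => reweight_of_ne s hi hiv]
  obtain ⟨hi, hiv⟩ := mem_sdiff.mp hi
  exact reweight_of_ne s hi (by simpa using hiv)

end reweight

lemma lagPoly_delete_le {G : FinHypergraph} {r v : ℕ} (hwf : G.IsWf) (hu : G.IsUniform r)
    (hv : v ∈ G.verts) {x : ℕ → ℝ} (hx : x ∈ simplex G) (hxv : x v < 1) :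
    lagPoly (G.delete {v}) x ≤ lag (G.delete {v}) * (1 - x v) ^ r := by
  have hpos : 0 < 1 - x v := sub_pos.mpr hxv
  have hscale : ∀ i ∈ (G.delete {v}).verts, reweight G v x 0 i = 1 / (1 - x v) * x i := by
    intro i hi
    obtain ⟨hi, hiv⟩ := mem_sdiff.mp hi
    simpa using reweight_of_ne 0 hi (by simpa using hiv)
  have h := lagPoly_le_lag hwf.delete_singleton (reweight_zero_mem_simplex_delete hv hx hxv)
  rw [lagPoly_eq_pow_mul hwf.delete_singleton hu.delete_singleton hscale] at h
  rwa [one_div, inv_pow, inv_mul_le_iff₀ (pow_pos hpos r), mul_comm] at h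

lemma lag_mul_one_sub_three_mul_eq_lagPoly_delete {G : FinHypergraph} {v : ℕ} (hwf : G.IsWf)
    (hu : G.IsUniform 3) (hv : v ∈ G.verts) {x : ℕ → ℝ} (hx : x ∈ simplex G)
    (hopt : lagPoly G x = lag G) (hxv : x v < 1) :
    lag G * (1 - 3 * x v) = lagPoly (G.delete {v}) x := by
  obtain ht | ht := (hx.1 v).1.eq_or_lt
  · rw [← hopt, lagPoly_eq_delete_add_linkPoly G v x, ← ht]; ring
  set t := x v
  set A := lagPoly (G.delete {v}) x
  set D := linkPoly G v x
  have hdecomp : lag G = A + t * D := hopt ▸ lagPoly_eq_delete_add_linkPoly G v x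
  have hpos : 0 < 1 - t := sub_pos.mpr hxv
  have hmax : IsLocalMax
      (fun s => ((1 - s) / (1 - t)) ^ 3 * A + s * (((1 - s) / (1 - t)) ^ (3 - 1) * D)) t := by
    filter_upwards [isOpen_Ioo.mem_nhds ⟨ht, hxv⟩] with s hs
    rw [← lagPoly_reweight hwf hu, div_self hpos.ne', one_pow, one_pow, one_mul, one_mul,
      ← hdecomp]
    exact lagPoly_le_lag hwf (reweight_mem_simplex hv hx hxv ⟨hs.1.le, hs.2.le⟩)
  have hc : HasDerivAt (fun s => (1 - s) / (1 - t)) (-1 / (1 - t)) t :=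
    ((hasDerivAt_id t).const_sub 1).div_const _
  have hderiv := (((hc.pow 3).mul_const A).add
    ((hasDerivAt_id t).mul ((hc.pow 2).mul_const D))).congr_deriv
      (g' := (-3 * A + (1 - 3 * t) * D) / (1 - t))
      (by simp only [Pi.pow_apply, id_eq]; field_simp; ring)
  have hcrit := (div_eq_zero_iff.mp (hmax.hasDerivAt_eq_zero hderiv)).resolve_right hpos.ne'
  rw [hdecomp]
  linear_combination t * hcrit

theorem stmt_8_general (G H : FinHypergraph) (hwf : G.IsWf) (hu : G.IsUniform 3)
    (v : ℕ) (hv : v ∈ G.verts)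
    (x : ℕ → ℝ) (hx : x ∈ simplex G) (hopt : lagPoly G x = lag G)
    (hxv : x v < 1 / 3)
    (hfree : ¬ containsCopy (G.delete {v}) H) :
    lag G ≤ lagDensity H * (1 - x v) ^ 3 / (6 * (1 - 3 * x v)) := by
  have hxv1 : x v < 1 := by linarith
  have hdensity := le_lagDensity hwf.delete_singleton hu.delete_singleton hfree
  rw [le_div_iff₀ (by linarith)]
  calc lag G * (6 * (1 - 3 * x v)) = 6 * lagPoly (G.delete {v}) x := by
        rw [← lag_mul_one_sub_three_mul_eq_lagPoly_delete hwf hu hv hx hopt hxv1]; ring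
    _ ≤ 6 * (lag (G.delete {v}) * (1 - x v) ^ 3) := by
        gcongr; exact lagPoly_delete_le hwf hu hv hx hxv1
    _ ≤ lagDensity H * (1 - x v) ^ 3 := by
        rw [← mul_assoc]; gcongr

/-- If `v` has weight `x_v < 1/3` in an optimum weight vector of a 3-graph `G`
and `G − {v}` is `H`-free, then `λ(G) ≤ π_λ(H)(1 − x_v)³/(6(1 − 3x_v))`. -/
theorem stmt_8 (G H : FinHypergraph) (hwf : G.IsWf) (hu : G.IsUniform 3)
    (hHu : H.IsUniform 3)
    (v : ℕ) (hv : v ∈ G.verts)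
    (x : ℕ → ℝ) (hx : x ∈ simplex G) (hopt : lagPoly G x = lag G)
    (hxv : x v < 1 / 3)
    (hfree : ¬ containsCopy (G.delete {v}) H) :
    lag G ≤ lagDensity H * (1 - x v) ^ 3 / (6 * (1 - 3 * x v)) :=
  stmt_8_general G H hwf hu v hv x hx hopt hxv hfree
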